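/- arXiv:1810.01219 — 2 statements merged into one kernel-verified Lean document; each statement's English description precedes it below -/
import Mathlib

section
/- Let p be a prime. There exists a set E ⊆ ℚ_p of Hausdorff dimension 1 that contains no nondegenerate three-term arithmetic progression; that is, there are no three distinct points x, y, z ∈ E with x + z = 2y. -/
/-!
Inside `ℤ_[p] ⊆ ℚ_[p]`, cut the base-`p` digits of `x` into consecutive blocks, the `k`-th of
length `k + 2`, and read each block as an integer. Let `E` be the set of `x` whose `k`-th block
lies in `D k`, a progression-free subset of `[0, p ^ (k + 2) / 2)` of maximal size (a Behrend
set, shifted to contain `0`). Since every block is below half its modulus, `x + z = 2 * y`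
causes no carries, so it forces `a + c = 2 * b` block by block; the blocks of `x` and `y`
therefore agree one after another, and `x = y`.

For the dimension, record the position of the `k`-th block inside `D k` as the `k`-th digit of a
mixed-radix expansion with radices `#(D k)`. This maps `E` onto `[0, 1]`. By Behrend,
`#(D k) ≥ p ^ ((k + 2) (1 - o(1)))`, while the block boundaries grow quadratically. Hence the map
is `α`-Hölder for every `α < 1`, and `dimH E ≥ 1`. The bound `dimH ℤ_[p] ≤ 1` comes from
covering `ℤ_[p]` by its `p ^ m` residue classes mod `p ^ m`.
-/

open MeasureTheory Finset Filter
open scoped ENNReal NNReal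

theorem HolderWith.of_dist_le {X Y : Type*} [PseudoMetricSpace X] [PseudoMetricSpace Y]
    {C r : ℝ≥0} {f : X → Y} (h : ∀ x y, dist (f x) (f y) ≤ C * dist x y ^ (r : ℝ)) :
    HolderWith C r f := by
  intro x y
  rw [edist_nndist, edist_nndist, ← ENNReal.coe_rpow_of_nonneg _ r.coe_nonneg, ← ENNReal.coe_mul,
    ENNReal.coe_le_coe, ← NNReal.coe_le_coe]
  exact_mod_cast h x y

theorem one_le_dimH_of_holderOnWith {X : Type*} [EMetricSpace X] {f : X → ℝ} {s : Set X}
    (hf : ∀ α : ℝ≥0, α < 1 → ∃ C, HolderOnWith C α f s) (hs : Set.Icc 0 1 ⊆ f '' s) :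
    1 ≤ dimH s := by
  refine ENNReal.le_of_forall_nnreal_lt fun r hr => ?_
  rcases eq_or_ne r 0 with rfl | hr₀
  · simp
  obtain ⟨C, hC⟩ := hf r (by exact_mod_cast hr)
  have hIcc : dimH (Set.Icc (0 : ℝ) 1) = 1 := by
    rw [Real.dimH_of_nonempty_interior (by simp)]
    simp
  have h := (hIcc.symm.le.trans (dimH_mono hs)).trans (hC.dimH_image_le (pos_iff_ne_zero.2 hr₀))
  rwa [ENNReal.le_div_iff_mul_le (.inl (by exact_mod_cast hr₀)) (.inl ENNReal.coe_ne_top),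
    one_mul] at h

theorem exists_lt_abs_sub_div_lt {R : ℕ} (hR : 0 < R) {t : ℝ} (ht : t ∈ Set.Icc (0 : ℝ) 1) :
    ∃ N < R, |N / R - t| < 2 / R := by
  obtain ⟨ht₀, ht₁⟩ := ht
  have hR' : (1 : ℝ) ≤ R := by exact_mod_cast hR
  have htR : t * (R - 1) ≤ R - 1 := mul_le_of_le_one_left (sub_nonneg.2 hR') ht₁
  set N := ⌊t * (R - 1)⌋₊
  have hN₁ : (N : ℝ) ≤ t * (R - 1) := Nat.floor_le (mul_nonneg ht₀ (sub_nonneg.2 hR'))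
  have hN₂ : t * (R - 1) < N + 1 := Nat.lt_floor_add_one _
  have hlow : (N : ℝ) / R ≤ t := by rw [div_le_iff₀ (by linarith)]; nlinarith
  have hup : t < N / R + 2 / R := by rw [← add_div, lt_div_iff₀ (by linarith)]; nlinarith
  refine ⟨N, by exact_mod_cast (show (N : ℝ) < R by linarith), ?_⟩
  rw [abs_sub_lt_iff]
  constructor <;> linarith [show (0 : ℝ) < 2 / R by positivity]

theorem add_mul_lt_mul_of_lt_of_lt {P Q m a : ℕ} (hm : m < P) (ha : a < Q) : m + P * a < P * Q := by
  nlinarith [Nat.mul_le_mul_left P (Nat.succ_le_of_lt ha)]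

theorem sub_mul_le_sq_div {a b x y : ℝ} (ha : 0 < a) (hxy : x ^ 2 ≤ 2 * y) :
    b * x - a * y ≤ b ^ 2 / (2 * a) := by
  rw [le_div_iff₀ (by positivity)]
  nlinarith [sq_nonneg (a * x - b), mul_le_mul_of_nonneg_left hxy ha.le]

theorem Nat.count_mem_le_card (s : Finset ℕ) (a : ℕ) : Nat.count (· ∈ s) a ≤ #s := by
  rw [Nat.count_eq_card_filter_range]
  exact card_le_card fun x hx => (mem_filter.1 hx).2

theorem Nat.exists_mem_count_eq (s : Finset ℕ) {j : ℕ} (hj : j < #s) :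
    ∃ a ∈ s, Nat.count (· ∈ s) a = j := by
  have hs : (Set.ofPred (· ∈ s)).Finite := s.finite_toSet
  have hcard : #hs.toFinset = #s := by congr 1; ext; simp [Set.ofPred]
  exact ⟨_, Nat.nth_mem_of_lt_card hs (hcard ▸ hj), Nat.count_nth_of_lt_card_finite hs (hcard ▸ hj)⟩

theorem two_le_rothNumberNat {N : ℕ} (hN : 2 ≤ N) : 2 ≤ rothNumberNat N := by
  refine ThreeAPFree.le_rothNumberNat {0, 1} ?_ (fun x hx => ?_) rfl
  · intro a ha b hb c hc habc
    simp only [coe_insert, coe_singleton, Set.mem_insert_iff, Set.mem_singleton_iff] at ha hb hc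
    omega
  · simp only [mem_insert, mem_singleton] at hx
    omega

theorem exists_threeAPFree_zero_mem_card_eq_rothNumberNat {N : ℕ} (hN : 0 < N) :
    ∃ A : Finset ℕ, A ⊆ range N ∧ 0 ∈ A ∧ ThreeAPFree (A : Set ℕ) ∧ #A = rothNumberNat N := by
  obtain ⟨T, hTN, hTcard, hT⟩ := rothNumberNat_spec N
  have hTne : T.Nonempty := by
    rw [← card_pos, hTcard]
    exact ThreeAPFree.le_rothNumberNat {0} (by simp) (by simpa) rfl
  have hmin := T.min'_le
  refine ⟨T.image (· - T.min' hTne), fun a ha => ?_, mem_image.2 ⟨_, T.min'_mem _, Nat.sub_self _⟩,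
    ?_, ?_⟩
  · obtain ⟨b, hb, rfl⟩ := mem_image.1 ha
    have := mem_range.1 (hTN hb)
    exact mem_range.2 (by omega)
  · rw [coe_image]
    rintro _ ⟨a, ha, rfl⟩ _ ⟨b, hb, rfl⟩ _ ⟨c, hc, rfl⟩ habc
    beta_reduce at habc ⊢
    have := hmin a ha; have := hmin b hb; have := hmin c hc
    have := hT ha hb hc (by omega)
    omega
  · rw [card_image_of_injOn fun a ha b hb hab => ?_, hTcard]
    have := hmin a ha; have := hmin b hb
    omega

theorem le_log_rothNumberNat {β : ℝ} (hβ : β < 1) {N : ℕ} (hN : 0 < N) :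
    β * Real.log N - 4 / (1 - β) ≤ Real.log (rothNumberNat N) := by
  have hβ' : 0 < 1 - β := by linarith
  set s := √(Real.log N)
  have hs : s ^ 2 = Real.log N := Real.sq_sqrt (Real.log_nonneg (by exact_mod_cast hN))
  -- AM-GM absorbs Behrend's loss `4 * s` into `(1 - β) * s ^ 2 = (1 - β) * log N`.
  have hamgm : 4 * s - (1 - β) * s ^ 2 ≤ 4 / (1 - β) := by
    rw [le_div_iff₀ hβ']
    nlinarith [sq_nonneg ((1 - β) * s - 2)]
  calc β * Real.log N - 4 / (1 - β) ≤ Real.log N - 4 * s := by nlinarith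
    _ = Real.log (N * Real.exp (-4 * s)) := by
        rw [Real.log_mul (by positivity) (by positivity), Real.log_exp]
        ring
    _ ≤ Real.log (rothNumberNat N) :=
        Real.log_le_log (by positivity) Behrend.roth_lower_bound

namespace PadicInt

variable {p : ℕ} [Fact p.Prime]

theorem toZModPow_eq_iff_norm_sub_le {m : ℕ} {x y : ℤ_[p]} :
    toZModPow m x = toZModPow m y ↔ ‖x - y‖ ≤ (p : ℝ) ^ (-(m : ℤ)) := by
  rw [norm_le_pow_iff_mem_span_pow, ← ker_toZModPow, RingHom.mem_ker, map_sub, sub_eq_zero]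

theorem toZModPow_eq_of_le {m m' : ℕ} (h : m ≤ m') {x y : ℤ_[p]}
    (hxy : toZModPow m' x = toZModPow m' y) : toZModPow m x = toZModPow m y := by
  rw [← cast_toZModPow m m' h, hxy, cast_toZModPow _ _ h]

theorem isLocallyConstant_toZModPow (m : ℕ) :
    IsLocallyConstant (toZModPow m : ℤ_[p] → ZMod (p ^ m)) := by
  refine (IsLocallyConstant.iff_eventually_eq _).2 fun x => ?_
  have hp : (0 : ℝ) < p := by exact_mod_cast (Fact.out : p.Prime).pos
  filter_upwards [Metric.closedBall_mem_nhds x (zpow_pos hp (-(m : ℤ)))] with y hy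
  rwa [toZModPow_eq_iff_norm_sub_le, ← dist_eq_norm]

theorem val_toZModPow_natCast (m a : ℕ) : (toZModPow m (a : ℤ_[p])).val = a % p ^ m := by
  rw [map_natCast, ZMod.val_natCast]

theorem dimH_univ_le_one : dimH (Set.univ : Set ℤ_[p]) ≤ 1 := by
  borelize ℤ_[p]
  have hp : (1 : ℝ≥0∞) < p := by exact_mod_cast (Fact.out : p.Prime).one_lt
  have hdiam : ∀ m (i : ZMod (p ^ m)),
      Metric.ediam {x : ℤ_[p] | toZModPow m x = i} ≤ (p : ℝ≥0∞)⁻¹ ^ m := by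
    intro m i
    refine Metric.ediam_le fun x hx y hy => ?_
    have h := toZModPow_eq_iff_norm_sub_le.1 (hx.trans hy.symm)
    rw [edist_dist, dist_eq_norm,
      ENNReal.ofReal_le_iff_le_toReal (by simp [(Fact.out : p.Prime).ne_zero])]
    simpa [zpow_neg] using h
  have hμ : μH[1] (Set.univ : Set ℤ_[p]) ≤ 1 := by
    refine (Measure.hausdorffMeasure_le_liminf_sum _ _ _
      (ENNReal.tendsto_pow_atTop_nhds_zero_of_lt_one (ENNReal.inv_lt_one.2 hp))
      (fun m (i : ZMod (p ^ m)) => {x : ℤ_[p] | toZModPow m x = i})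
      (.of_forall hdiam) (.of_forall fun m x _ => Set.mem_iUnion.2 ⟨_, rfl⟩)).trans ?_
    refine (liminf_le_liminf (.of_forall fun m => ?_)).trans (liminf_const 1).le
    calc ∑ i : ZMod (p ^ m), Metric.ediam {x : ℤ_[p] | toZModPow m x = i} ^ (1 : ℝ)
        ≤ ∑ _i : ZMod (p ^ m), (p : ℝ≥0∞)⁻¹ ^ m := by
          gcongr with i
          rw [ENNReal.rpow_one]
          exact hdiam m i
      _ = 1 := by
          rw [sum_const, card_univ, ZMod.card, nsmul_eq_mul, Nat.cast_pow, ← mul_pow,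
            ENNReal.mul_inv_cancel (by simp [(Fact.out : p.Prime).ne_zero]) (by simp), one_pow]
  simpa using dimH_le_of_hausdorffMeasure_ne_top (d := 1)
    (by simpa using (hμ.trans_lt ENNReal.one_lt_top).ne)

end PadicInt

noncomputable section

namespace PadicThreeAPFree

open PadicInt

variable {p : ℕ} [Fact p.Prime] {n : ℕ → ℕ} {D : ℕ → Finset ℕ}

def blockStart (n : ℕ → ℕ) (k : ℕ) : ℕ := ∑ j ∈ range k, n j

def digitBlock (n : ℕ → ℕ) (k : ℕ) (x : ℤ_[p]) : ℕ :=
  (toZModPow (blockStart n (k + 1)) x).val / p ^ blockStart n k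

def digitSet (n : ℕ → ℕ) (D : ℕ → Finset ℕ) : Set ℤ_[p] := {x | ∀ k, digitBlock n k x ∈ D k}

theorem blockStart_zero : blockStart n 0 = 0 := rfl

theorem blockStart_succ (k : ℕ) : blockStart n (k + 1) = blockStart n k + n k :=
  sum_range_succ _ _

theorem blockStart_mono : Monotone (blockStart n) := fun _ _ h =>
  sum_le_sum_of_subset (range_subset_range.2 h)

theorem le_blockStart (hn : ∀ k, 0 < n k) (k : ℕ) : k ≤ blockStart n k := by
  induction k with
  | zero => rfl
  | succ k ih => rw [blockStart_succ]; have := hn k; omega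

theorem exists_blockStart_le_lt (hn : ∀ k, 0 < n k) (m : ℕ) :
    ∃ k, blockStart n k ≤ m ∧ m < blockStart n (k + 1) := by
  have hex : ∃ k, m < blockStart n k := ⟨m + 1, le_blockStart hn _⟩
  obtain ⟨k, hk⟩ : ∃ k, Nat.find hex = k + 1 :=
    Nat.exists_eq_succ_of_ne_zero fun h => by simpa [h, blockStart_zero] using Nat.find_spec hex
  exact ⟨k, not_lt.1 (Nat.find_min hex (by omega)), hk ▸ Nat.find_spec hex⟩

theorem val_toZModPow_blockStart_succ (k : ℕ) (x : ℤ_[p]) :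
    (toZModPow (blockStart n (k + 1)) x).val =
      (toZModPow (blockStart n k) x).val + p ^ blockStart n k * digitBlock n k x := by
  rw [← cast_toZModPow _ _ (blockStart_mono k.le_succ) x, ZMod.cast_eq_val, ZMod.val_natCast,
    digitBlock, Nat.mod_add_div]

theorem digitBlock_eq_of_toZModPow_eq {k j : ℕ} (hj : j < k) {x y : ℤ_[p]}
    (h : toZModPow (blockStart n k) x = toZModPow (blockStart n k) y) :
    digitBlock n j x = digitBlock n j y := by
  rw [digitBlock, digitBlock, toZModPow_eq_of_le (blockStart_mono hj) h]

theorem isLocallyConstant_digitBlock (k : ℕ) :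
    IsLocallyConstant (digitBlock n k : ℤ_[p] → ℕ) :=
  (isLocallyConstant_toZModPow _).comp fun r => r.val / p ^ blockStart n k

theorem digitBlock_natCast_eq_zero {k m : ℕ} (hm : m < p ^ blockStart n k) :
    digitBlock n k (m : ℤ_[p]) = 0 := by
  rw [digitBlock, val_toZModPow_natCast]
  exact Nat.div_eq_of_lt ((Nat.mod_le _ _).trans_lt hm)

theorem digitBlock_natCast_add_mul {K m a : ℕ} (hm : m < p ^ blockStart n K) (ha : a < p ^ n K)
    (k : ℕ) : digitBlock n k ((m + p ^ blockStart n K * a : ℕ) : ℤ_[p]) =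
      if k = K then a else digitBlock n k (m : ℤ_[p]) := by
  have hp : 0 < p := (Fact.out : p.Prime).pos
  have hlt : m + p ^ blockStart n K * a < p ^ blockStart n (K + 1) := by
    rw [blockStart_succ, pow_add]; exact add_mul_lt_mul_of_lt_of_lt hm ha
  rcases lt_trichotomy k K with hk | rfl | hk
  · rw [if_neg hk.ne, digitBlock, digitBlock, val_toZModPow_natCast, val_toZModPow_natCast]
    obtain ⟨c, hc⟩ := pow_dvd_pow p (blockStart_mono (n := n) (Nat.succ_le_of_lt hk))
    rw [hc, mul_assoc, Nat.add_mul_mod_self_left]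
  · rw [if_pos rfl, digitBlock, val_toZModPow_natCast, Nat.mod_eq_of_lt hlt,
      Nat.add_mul_div_left _ _ (pow_pos hp _), Nat.div_eq_of_lt hm, zero_add]
  · have hle := Nat.pow_le_pow_right hp (blockStart_mono (n := n) (Nat.succ_le_of_lt hk))
    rw [if_neg hk.ne', digitBlock_natCast_eq_zero (hlt.trans_le hle),
      digitBlock_natCast_eq_zero (hm.trans_le (Nat.pow_le_pow_right hp (blockStart_mono hk.le)))]

theorem isClosed_digitSet : IsClosed (digitSet n D : Set ℤ_[p]) := by
  simp only [digitSet, Set.ofPred_forall]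
  exact isClosed_iInter fun k =>
    (isClosed_discrete (D k : Set ℕ)).preimage (isLocallyConstant_digitBlock k).continuous

theorem add_eq_add_of_add_mul_modEq {P Q t a b c : ℕ} (hP : 0 < P) (hac : a + c < Q)
    (hb : b + b < Q) (h : t + P * a + (t + P * c) ≡ t + P * b + (t + P * b) [MOD P * Q]) :
    a + c = b + b := by
  have h' : t + t + P * (a + c) ≡ t + t + P * (b + b) [MOD P * Q] := by
    convert h using 1 <;> ring
  exact ((h'.add_left_cancel' _).mul_left_cancel' hP.ne').eq_of_lt_of_lt hac hb

theorem toZModPow_blockStart_succ_eq {k : ℕ} (hD : ThreeAPFree (D k : Set ℕ))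
    (hDlt : ∀ a ∈ D k, 2 * a < p ^ n k) {x y z : ℤ_[p]} (hx : digitBlock n k x ∈ D k)
    (hy : digitBlock n k y ∈ D k) (hz : digitBlock n k z ∈ D k) (hxyz : x + z = y + y)
    (hxy : toZModPow (blockStart n k) x = toZModPow (blockStart n k) y)
    (hzy : toZModPow (blockStart n k) z = toZModPow (blockStart n k) y) :
    toZModPow (blockStart n (k + 1)) x = toZModPow (blockStart n (k + 1)) y ∧
      toZModPow (blockStart n (k + 1)) z = toZModPow (blockStart n (k + 1)) y := by
  have hmod : (toZModPow (blockStart n (k + 1)) x).val + (toZModPow (blockStart n (k + 1)) z).val ≡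
      (toZModPow (blockStart n (k + 1)) y).val + (toZModPow (blockStart n (k + 1)) y).val
      [MOD p ^ blockStart n k * p ^ n k] := by
    rw [← pow_add, ← blockStart_succ, ← ZMod.natCast_eq_natCast_iff]
    push_cast
    simp only [ZMod.natCast_val, ZMod.cast_id', id, ← map_add, hxyz]
  simp only [val_toZModPow_blockStart_succ, hxy, hzy] at hmod
  have hsum := add_eq_add_of_add_mul_modEq (pow_pos (Fact.out : p.Prime).pos _)
    (by linarith [hDlt _ hx, hDlt _ hz]) (by linarith [hDlt _ hy]) hmod
  have hab := hD hx hy hz hsum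
  have hcb : digitBlock n k z = digitBlock n k y := by omega
  constructor <;> apply ZMod.val_injective <;>
    simp only [val_toZModPow_blockStart_succ, hxy, hzy, hab, hcb]

theorem eq_of_forall_toZModPow_blockStart_eq (hn : ∀ k, 0 < n k) {x y : ℤ_[p]}
    (h : ∀ k, toZModPow (blockStart n k) x = toZModPow (blockStart n k) y) : x = y :=
  ext_of_toZModPow.1 fun m => toZModPow_eq_of_le (le_blockStart hn m) (h m)

theorem threeAPFree_digitSet (hn : ∀ k, 0 < n k) (hD : ∀ k, ThreeAPFree (D k : Set ℕ))
    (hDlt : ∀ k, ∀ a ∈ D k, 2 * a < p ^ n k) : ThreeAPFree (digitSet n D : Set ℤ_[p]) := by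
  intro x hx y hy z hz hxyz
  have key : ∀ k, toZModPow (blockStart n k) x = toZModPow (blockStart n k) y ∧
      toZModPow (blockStart n k) z = toZModPow (blockStart n k) y := by
    intro k
    induction k with
    | zero =>
      rw [toZModPow_eq_iff_norm_sub_le, toZModPow_eq_iff_norm_sub_le, blockStart_zero]
      simp only [CharP.cast_eq_zero, neg_zero, zpow_zero, norm_le_one, and_self]
    | succ k ih =>
      exact toZModPow_blockStart_succ_eq (hD k) (hDlt k) (hx k) (hy k) (hz k) hxyz ih.1 ih.2
  exact eq_of_forall_toZModPow_blockStart_eq hn fun k => (key k).1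

def prefixCount (D : ℕ → Finset ℕ) (k : ℕ) : ℕ := ∏ j ∈ range k, #(D j)

def mixedRadixTerm (n : ℕ → ℕ) (D : ℕ → Finset ℕ) (k : ℕ) (x : ℤ_[p]) : ℝ :=
  Nat.count (· ∈ D k) (digitBlock n k x) / prefixCount D (k + 1)

def mixedRadixMap (n : ℕ → ℕ) (D : ℕ → Finset ℕ) (x : ℤ_[p]) : ℝ :=
  ∑' k, mixedRadixTerm n D k x

theorem prefixCount_succ (k : ℕ) : prefixCount D (k + 1) = prefixCount D k * #(D k) :=
  prod_range_succ _ _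

theorem prefixCount_pos (hcard : ∀ k, 2 ≤ #(D k)) (k : ℕ) : 0 < prefixCount D k :=
  prod_pos fun j _ => by have := hcard j; omega

theorem prefixCount_mul_two_pow_le (hcard : ∀ k, 2 ≤ #(D k)) (k i : ℕ) :
    prefixCount D k * 2 ^ i ≤ prefixCount D (i + k) := by
  induction i with
  | zero => simp
  | succ i ih =>
    rw [add_right_comm, prefixCount_succ, pow_succ, ← mul_assoc]
    exact Nat.mul_le_mul ih (hcard _)

theorem two_pow_le_prefixCount (hcard : ∀ k, 2 ≤ #(D k)) (k : ℕ) : 2 ^ k ≤ prefixCount D k := by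
  simpa [prefixCount] using prefixCount_mul_two_pow_le hcard 0 k

theorem mixedRadixTerm_nonneg (k : ℕ) (x : ℤ_[p]) : 0 ≤ mixedRadixTerm n D k x := by
  unfold mixedRadixTerm; positivity

theorem mixedRadixTerm_le (hcard : ∀ k, 2 ≤ #(D k)) (i k : ℕ) (x : ℤ_[p]) :
    mixedRadixTerm n D (i + k) x ≤ (1 / 2) ^ i / prefixCount D k := by
  have hpos := prefixCount_pos hcard
  have hcardpos : (0 : ℝ) < #(D (i + k)) := by have := hcard (i + k); positivity
  calc mixedRadixTerm n D (i + k) x ≤ #(D (i + k)) / prefixCount D (i + k + 1) := by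
        unfold mixedRadixTerm
        gcongr
        exact_mod_cast Nat.count_mem_le_card _ _
    _ = 1 / prefixCount D (i + k) := by
        rw [prefixCount_succ, Nat.cast_mul]
        field_simp
    _ ≤ 1 / (prefixCount D k * 2 ^ i) := by
        gcongr
        · have := hpos k; positivity
        · exact_mod_cast prefixCount_mul_two_pow_le hcard k i
    _ = (1 / 2) ^ i / prefixCount D k := by
        rw [one_div_pow, div_div, mul_comm]

theorem mixedRadixTerm_le_geometric (hcard : ∀ k, 2 ≤ #(D k)) (k : ℕ) (x : ℤ_[p]) :
    mixedRadixTerm n D k x ≤ (1 / 2) ^ k := by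
  simpa [prefixCount] using mixedRadixTerm_le hcard k 0 x

theorem summable_mixedRadixTerm (hcard : ∀ k, 2 ≤ #(D k)) (x : ℤ_[p]) :
    Summable fun k => mixedRadixTerm n D k x :=
  .of_nonneg_of_le (mixedRadixTerm_nonneg · x) (mixedRadixTerm_le_geometric hcard · x)
    summable_geometric_two

theorem tsum_mixedRadixTerm_add_le (hcard : ∀ k, 2 ≤ #(D k)) (k : ℕ) (x : ℤ_[p]) :
    ∑' i, mixedRadixTerm n D (i + k) x ≤ 2 / prefixCount D k := by
  rw [← tsum_geometric_two, ← tsum_div_const]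
  exact Summable.tsum_le_tsum (mixedRadixTerm_le hcard · k x)
    ((summable_nat_add_iff k).2 (summable_mixedRadixTerm hcard x))
    (summable_geometric_two.div_const _)

theorem dist_mixedRadixMap_le (hcard : ∀ k, 2 ≤ #(D k)) {k : ℕ} {x y : ℤ_[p]}
    (h : ∀ j < k, digitBlock n j x = digitBlock n j y) :
    dist (mixedRadixMap n D x) (mixedRadixMap n D y) ≤ 2 / prefixCount D k := by
  have hhead : ∑ j ∈ range k, mixedRadixTerm n D j x = ∑ j ∈ range k, mixedRadixTerm n D j y :=
    sum_congr rfl fun j hj => by rw [mixedRadixTerm, h j (mem_range.1 hj), mixedRadixTerm]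
  have hx := tsum_mixedRadixTerm_add_le (n := n) hcard k x
  have hy := tsum_mixedRadixTerm_add_le (n := n) hcard k y
  have hx₀ : 0 ≤ ∑' i, mixedRadixTerm n D (i + k) x := tsum_nonneg fun i => mixedRadixTerm_nonneg ..
  have hy₀ : 0 ≤ ∑' i, mixedRadixTerm n D (i + k) y := tsum_nonneg fun i => mixedRadixTerm_nonneg ..
  rw [Real.dist_eq, mixedRadixMap, mixedRadixMap,
    ← (summable_mixedRadixTerm hcard x).sum_add_tsum_nat_add k,
    ← (summable_mixedRadixTerm hcard y).sum_add_tsum_nat_add k, hhead, abs_le]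
  constructor <;> linarith

theorem continuous_mixedRadixMap (hcard : ∀ k, 2 ≤ #(D k)) :
    Continuous (mixedRadixMap n D : ℤ_[p] → ℝ) := by
  refine continuous_tsum (fun k => ?_) summable_geometric_two fun k x => ?_
  · exact ((isLocallyConstant_digitBlock k).comp fun a =>
      (Nat.count (· ∈ D k) a : ℝ) / prefixCount D (k + 1)).continuous
  · rw [Real.norm_of_nonneg (mixedRadixTerm_nonneg k x)]
    exact mixedRadixTerm_le_geometric hcard k x

theorem holderWith_mixedRadixMap (hcard : ∀ k, 2 ≤ #(D k)) (hn : ∀ k, 0 < n k) {α C : ℝ≥0}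
    (hR : ∀ k, (p : ℝ) ^ ((α : ℝ) * blockStart n (k + 1)) ≤ C * prefixCount D k) :
    HolderWith (2 * C) α (mixedRadixMap n D : ℤ_[p] → ℝ) := by
  refine HolderWith.of_dist_le fun x y => ?_
  rcases eq_or_ne x y with rfl | hxy
  · rw [dist_self]; positivity
  have hp : (1 : ℝ) < p := by exact_mod_cast (Fact.out : p.Prime).one_lt
  set v := (x - y).valuation
  have hdist : dist x y = (p : ℝ) ^ (-(v : ℝ)) := by
    rw [dist_eq_norm, norm_eq_zpow_neg_valuation (sub_ne_zero.2 hxy), ← Real.rpow_intCast]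
    push_cast
    rfl
  obtain ⟨k, hkv, hvk⟩ := exists_blockStart_le_lt hn v
  have hcongr : toZModPow (blockStart n k) x = toZModPow (blockStart n k) y := by
    rw [toZModPow_eq_iff_norm_sub_le, ← dist_eq_norm, hdist, ← Real.rpow_intCast]
    exact Real.rpow_le_rpow_of_exponent_le hp.le
      (by push_cast; exact neg_le_neg (by exact_mod_cast hkv))
  have hpc : (0 : ℝ) < prefixCount D k := by exact_mod_cast prefixCount_pos hcard k
  have hpow : (0 : ℝ) < (p : ℝ) ^ ((α : ℝ) * blockStart n (k + 1)) := by positivity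
  calc dist (mixedRadixMap n D x) (mixedRadixMap n D y) ≤ 2 / prefixCount D k :=
        dist_mixedRadixMap_le hcard fun j hj => digitBlock_eq_of_toZModPow_eq hj hcongr
    _ ≤ 2 * C * (p : ℝ) ^ (-((α : ℝ) * blockStart n (k + 1))) := by
        rw [Real.rpow_neg (by positivity), ← div_eq_mul_inv, div_le_div_iff₀ hpc hpow]
        nlinarith [hR k]
    _ ≤ 2 * C * dist x y ^ (α : ℝ) := by
        rw [hdist, ← Real.rpow_mul (by positivity)]
        gcongr
        · exact hp.le
        · have : (v : ℝ) ≤ blockStart n (k + 1) := by exact_mod_cast hvk.le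
          nlinarith [α.coe_nonneg]

theorem mixedRadixMap_natCast_add_mul (hcard : ∀ k, 2 ≤ #(D k)) {K m a : ℕ}
    (hm : m < p ^ blockStart n K) (ha : a < p ^ n K) :
    mixedRadixMap n D ((m + p ^ blockStart n K * a : ℕ) : ℤ_[p]) =
      mixedRadixMap n D (m : ℤ_[p]) + Nat.count (· ∈ D K) a / prefixCount D (K + 1) := by
  have hterm : ∀ k, mixedRadixTerm n D k ((m + p ^ blockStart n K * a : ℕ) : ℤ_[p]) =
      mixedRadixTerm n D k (m : ℤ_[p]) +
        if k = K then (Nat.count (· ∈ D K) a : ℝ) / prefixCount D (K + 1) else 0 := by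
    intro k
    rw [mixedRadixTerm, mixedRadixTerm, digitBlock_natCast_add_mul hm ha]
    split_ifs with hk
    · subst hk
      rw [digitBlock_natCast_eq_zero hm, Nat.count_zero, Nat.cast_zero, zero_div, zero_add]
    · rw [add_zero]
  rw [mixedRadixMap, mixedRadixMap, tsum_congr hterm,
    (summable_mixedRadixTerm hcard _).tsum_add (summable_of_ne_finset_zero (s := {K}) ?_),
    tsum_ite_eq]
  intro k hk
  rw [if_neg (by simpa using hk)]

theorem exists_natCast_mem_digitSet (hcard : ∀ k, 2 ≤ #(D k)) (hD0 : ∀ k, 0 ∈ D k)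
    (hDlt : ∀ k, ∀ a ∈ D k, a < p ^ n k) (K : ℕ) {N : ℕ} (hN : N < prefixCount D K) :
    ∃ m : ℕ, m < p ^ blockStart n K ∧ (m : ℤ_[p]) ∈ digitSet n D ∧
      mixedRadixMap n D (m : ℤ_[p]) = N / prefixCount D K := by
  induction K generalizing N with
  | zero =>
    obtain rfl : N = 0 := by simpa [prefixCount] using hN
    have hp := (Fact.out : p.Prime).pos
    have hdig : ∀ k, digitBlock n k (0 : ℤ_[p]) = 0 := fun k => by
      simpa using digitBlock_natCast_eq_zero (n := n) (k := k) (m := 0) (pow_pos hp _)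
    refine ⟨0, pow_pos hp _, fun k => ?_, ?_⟩
    · rw [Nat.cast_zero, hdig]
      exact hD0 k
    · simp [mixedRadixMap, mixedRadixTerm, hdig]
  | succ K ih =>
    have hq : 0 < #(D K) := by have := hcard K; omega
    rw [prefixCount_succ, mul_comm] at hN
    obtain ⟨m, hm, hmE, hfm⟩ := ih (Nat.div_lt_of_lt_mul hN)
    obtain ⟨a, haD, hacount⟩ := Nat.exists_mem_count_eq (D K) (Nat.mod_lt N hq)
    have ha := hDlt K a haD
    refine ⟨m + p ^ blockStart n K * a, ?_, fun k => ?_, ?_⟩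
    · rw [blockStart_succ, pow_add]; exact add_mul_lt_mul_of_lt_of_lt hm ha
    · rw [digitBlock_natCast_add_mul hm ha]
      split_ifs with hk
      · exact hk ▸ haD
      · exact hmE k
    · rw [mixedRadixMap_natCast_add_mul hcard hm ha, hfm, hacount, prefixCount_succ]
      have hR : (0 : ℝ) < prefixCount D K := by exact_mod_cast prefixCount_pos hcard K
      have hq' : (0 : ℝ) < #(D K) := by exact_mod_cast hq
      have hN' : (N : ℝ) = #(D K) * (N / #(D K) : ℕ) + (N % #(D K) : ℕ) := by
        exact_mod_cast (Nat.div_add_mod N _).symm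
      rw [hN', Nat.cast_mul]
      field_simp

theorem Icc_subset_image_mixedRadixMap (hcard : ∀ k, 2 ≤ #(D k)) (hD0 : ∀ k, 0 ∈ D k)
    (hDlt : ∀ k, ∀ a ∈ D k, a < p ^ n k) :
    Set.Icc 0 1 ⊆ mixedRadixMap n D '' (digitSet n D : Set ℤ_[p]) := by
  have hclosed : IsClosed (mixedRadixMap n D '' (digitSet n D : Set ℤ_[p])) :=
    (isClosed_digitSet.isCompact.image (continuous_mixedRadixMap hcard)).isClosed
  intro t ht
  rw [← hclosed.closure_eq, Metric.mem_closure_iff]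
  intro ε hε
  obtain ⟨K, hK⟩ := pow_unbounded_of_one_lt (2 / ε) one_lt_two
  have hRK : (2 : ℝ) ^ K ≤ prefixCount D K := by exact_mod_cast two_pow_le_prefixCount hcard K
  obtain ⟨N, hNR, hNt⟩ := exists_lt_abs_sub_div_lt (prefixCount_pos hcard K) ht
  obtain ⟨m, -, hmE, hm⟩ := exists_natCast_mem_digitSet hcard hD0 hDlt K hNR
  refine ⟨_, ⟨m, hmE, rfl⟩, ?_⟩
  rw [hm, dist_comm, Real.dist_eq]
  refine hNt.trans_le ?_
  rw [div_le_iff₀ (by exact_mod_cast prefixCount_pos hcard K)]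
  rw [div_lt_iff₀ hε] at hK
  nlinarith

theorem sq_le_two_mul_blockStart_add_two (k : ℕ) : k ^ 2 ≤ 2 * blockStart (· + 2) k := by
  induction k with
  | zero => simp
  | succ k ih => rw [blockStart_succ]; nlinarith

theorem two_le_pow_add_two_div_two (k : ℕ) : 2 ≤ p ^ (k + 2) / 2 := by
  have := Nat.pow_le_pow_left (Fact.out : p.Prime).two_le (k + 2)
  rw [pow_add] at this
  have := Nat.one_le_two_pow (n := k)
  omega

theorem le_log_rothNumberNat_pow_div_two {β : ℝ} (hβ₀ : 0 ≤ β) (hβ : β < 1) (k : ℕ) :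
    β * ((k + 2) * Real.log p) - (Real.log 4 + 4 / (1 - β)) ≤
      Real.log (rothNumberNat (p ^ (k + 2) / 2)) := by
  have hp : 0 < p := (Fact.out : p.Prime).pos
  have hM := two_le_pow_add_two_div_two (p := p) k
  have hM4 : ((p ^ (k + 2) : ℕ) : ℝ) / 4 ≤ (p ^ (k + 2) / 2 : ℕ) := by
    rw [div_le_iff₀ (by norm_num)]
    exact_mod_cast (by omega : p ^ (k + 2) ≤ p ^ (k + 2) / 2 * 4)
  have hlogM : (k + 2) * Real.log p - Real.log 4 ≤ Real.log (p ^ (k + 2) / 2 : ℕ) := by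
    calc (k + 2) * Real.log p - Real.log 4 = Real.log (((p ^ (k + 2) : ℕ) : ℝ) / 4) := by
          rw [Real.log_div (by positivity) (by norm_num), Nat.cast_pow, Real.log_pow]
          push_cast
          ring
      _ ≤ _ := Real.log_le_log (by positivity) hM4
  have hlog4 : 0 ≤ Real.log 4 := Real.log_nonneg (by norm_num)
  nlinarith [le_log_rothNumberNat hβ (by omega : 0 < p ^ (k + 2) / 2)]

theorem le_log_prefixCount (hD : ∀ k, #(D k) = rothNumberNat (p ^ (k + 2) / 2)) {β : ℝ}
    (hβ₀ : 0 ≤ β) (hβ : β < 1) (k : ℕ) :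
    β * (blockStart (· + 2) k * Real.log p) - (Real.log 4 + 4 / (1 - β)) * k ≤
      Real.log (prefixCount D k) := by
  rw [prefixCount, Nat.cast_prod, Real.log_prod fun j _ => by
    have := hD j ▸ two_le_rothNumberNat (two_le_pow_add_two_div_two j)
    positivity]
  refine le_trans (le_of_eq ?_) (sum_le_sum fun j _ => hD j ▸
    le_log_rothNumberNat_pow_div_two hβ₀ hβ j)
  simp only [blockStart, Nat.cast_sum, Nat.cast_add, Nat.cast_ofNat, sum_sub_distrib, sum_const,
    card_range, nsmul_eq_mul, mul_sum, sum_mul]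
  ring

theorem exists_rpow_blockStart_le_prefixCount
    (hD : ∀ k, #(D k) = rothNumberNat (p ^ (k + 2) / 2)) {α : ℝ≥0} (hα : α < 1) :
    ∃ C : ℝ≥0, ∀ k, (p : ℝ) ^ ((α : ℝ) * blockStart (· + 2) (k + 1)) ≤ C * prefixCount D k := by
  have hℓ : 0 < Real.log p := Real.log_pos (by exact_mod_cast (Fact.out : p.Prime).one_lt)
  have hα' : (α : ℝ) < 1 := by exact_mod_cast hα
  set β : ℝ := (1 + α) / 2 with hβ
  set γ := Real.log 4 + 4 / (1 - β)
  have ha : 0 < (β - α) * Real.log p := mul_pos (by rw [hβ]; linarith) hℓ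
  obtain ⟨B, hB⟩ : ∃ B, ∀ k : ℕ,
      (α * Real.log p + γ) * k - (β - α) * Real.log p * blockStart (· + 2) k ≤ B :=
    ⟨_, fun k => sub_mul_le_sq_div ha (by exact_mod_cast sq_le_two_mul_blockStart_add_two k)⟩
  refine ⟨Real.toNNReal (Real.exp (2 * α * Real.log p + B)), fun k => ?_⟩
  have hpc : (0 : ℝ) < prefixCount D k := by
    exact_mod_cast prefixCount_pos (fun j => hD j ▸ two_le_rothNumberNat
      (two_le_pow_add_two_div_two j)) k
  have hlog := le_log_prefixCount hD (β := β) (by rw [hβ]; positivity) (by rw [hβ]; linarith) k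
  have hL : (blockStart (· + 2) (k + 1) : ℝ) = blockStart (· + 2) k + k + 2 := by
    rw [blockStart_succ]; push_cast; ring
  calc (p : ℝ) ^ ((α : ℝ) * blockStart (· + 2) (k + 1))
      = Real.exp (α * blockStart (· + 2) (k + 1) * Real.log p) := by
        rw [Real.rpow_def_of_pos (by exact_mod_cast (Fact.out : p.Prime).pos)]; ring_nf
    _ ≤ Real.exp (2 * α * Real.log p + B + Real.log (prefixCount D k)) :=
        Real.exp_le_exp.2 (by rw [hL]; linarith [hB k])
    _ = _ := by
        rw [Real.exp_add, Real.exp_log hpc, Real.coe_toNNReal _ (Real.exp_pos _).le]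

theorem exists_threeAPFree_dimH_eq_one : ∃ E : Set ℤ_[p], dimH E = 1 ∧ ThreeAPFree E := by
  choose D hDsub hD0 hDfree hDcard using fun k =>
    exists_threeAPFree_zero_mem_card_eq_rothNumberNat (N := p ^ (k + 2) / 2)
      (by have := two_le_pow_add_two_div_two (p := p) k; omega)
  have hDlt : ∀ k, ∀ a ∈ D k, 2 * a < p ^ (k + 2) := fun k a ha => by
    have := mem_range.1 (hDsub k ha); omega
  have hcard : ∀ k, 2 ≤ #(D k) := fun k =>
    hDcard k ▸ two_le_rothNumberNat (two_le_pow_add_two_div_two k)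
  refine ⟨digitSet (· + 2) D, le_antisymm ((dimH_mono (Set.subset_univ _)).trans
    PadicInt.dimH_univ_le_one) ?_, threeAPFree_digitSet (by omega) hDfree hDlt⟩
  refine one_le_dimH_of_holderOnWith (fun α hα => ?_)
    (Icc_subset_image_mixedRadixMap hcard hD0 fun k a ha => by have := hDlt k a ha; omega)
  obtain ⟨C, hC⟩ := exists_rpow_blockStart_le_prefixCount hDcard hα
  exact ⟨_, (holderWith_mixedRadixMap hcard (by omega) hC).holderOnWith _⟩

end PadicThreeAPFree

end

/-- **Full-dimensional subsets of `ℚ_p` without three-term arithmetic progressions.**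
For every prime `p` there is a set `E ⊆ ℚ_p` of Hausdorff dimension `1` containing no three
distinct points `x, y, z` with `x + z = 2y`. -/
theorem padic_set_without_three_term_progressions (p : ℕ) [Fact p.Prime] :
    ∃ E : Set ℚ_[p], dimH E = 1 ∧
      ¬ ∃ x y z : ℚ_[p], x ∈ E ∧ y ∈ E ∧ z ∈ E ∧
        x ≠ y ∧ y ≠ z ∧ x ≠ z ∧ x + z = 2 * y := by
  obtain ⟨E, hdim, hfree⟩ := PadicThreeAPFree.exists_threeAPFree_dimH_eq_one (p := p)
  have hiso : Isometry (PadicInt.Coe.ringHom : ℤ_[p] →+* ℚ_[p]) :=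
    AddMonoidHomClass.isometry_of_norm _ fun x => (PadicInt.norm_def (z := x)).symm
  refine ⟨PadicInt.Coe.ringHom '' E, by rw [hiso.dimH_image, hdim], ?_⟩
  rintro ⟨x, y, z, hx, hy, hz, hxy, -, -, h⟩
  exact hxy (hfree.image' _ hiso.injective.injOn hx hy hz (h.trans (two_mul y)))
end

section
/- Let θ be a real algebraic number of degree k ≥ 2 over ℚ. Then there exists a constant C > 0, depending only on θ, such that for every real number x ∈ [0, 1] and every integer n ≥ 0 there exist integers a_0, a_1, …, a_{k−1} with |a_i| ≤ C·2^n for all i and |2^n x − (a_0 + a_1 θ + a_2 θ^2 + ⋯ + a_{k−1} θ^{k−1})| ≤ C·2^{−n(k−1)}; equivalently, every x ∈ [0,1] lies within distance C·2^{−nk} of a point of the form 2^{−n}(a_0 + a_1 θ + ⋯ + a_{k−1} θ^{k−1}) with integers |a_i| ≤ C·2^n. -/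
open Polynomial Finset in
lemma powers_indep_aux (θ : ℝ) (k : ℕ) (hk : 0 < k)
    (hdeg : (minpoly ℚ θ).natDegree = k) (d : ℕ → ℚ)
    (h : ∑ j ∈ Finset.range k, (d j : ℝ) * θ ^ j = 0) :
    ∀ j < k, d j = 0 := by
  set q : ℚ[X] := ∑ j ∈ Finset.range k, C (d j) * X ^ j with hq
  have haev : aeval θ q = 0 := by
    rw [hq, map_sum]
    simpa [Polynomial.aeval_C, Rat.cast_def] using h
  have hq0 : q = 0 := by
    by_contra hne
    have h1 : (minpoly ℚ θ).natDegree ≤ q.natDegree :=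
      Polynomial.natDegree_le_of_dvd (minpoly.dvd ℚ θ haev) hne
    have h2 : q.natDegree ≤ k - 1 := by
      apply Polynomial.natDegree_sum_le_of_forall_le
      intro j hj
      exact le_trans (Polynomial.natDegree_C_mul_X_pow_le _ _)
        (Nat.le_sub_one_of_lt (Finset.mem_range.1 hj))
    omega
  intro j hj
  have : q.coeff j = d j := by
    rw [hq, Polynomial.finset_sum_coeff]
    rw [Finset.sum_eq_single j]
    · simp
    · intro b _ hbj; simp [Polynomial.coeff_C_mul, Polynomial.coeff_X_pow,
        (Ne.symm hbj)]
    · intro hj'; exact absurd (Finset.mem_range.2 hj) hj'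
  rw [hq0] at this
  simpa using this.symm

open Polynomial Finset in
lemma clear_denoms (p : ℚ[X]) (k : ℕ) :
    ∃ (m : ℕ) (c : ℕ → ℤ), 0 < m ∧ ∀ j < k, (c j : ℚ) = m * p.coeff j := by
  classical
  set m : ℕ := ∏ j ∈ Finset.range k, (p.coeff j).den with hm
  refine ⟨m, fun j => (m / (p.coeff j).den : ℕ) * (p.coeff j).num, ?_, ?_⟩
  · exact Finset.prod_pos fun j _ => (p.coeff j).den_pos
  · intro j hj
    have hdvd : (p.coeff j).den ∣ m := Finset.dvd_prod_of_mem _ (Finset.mem_range.2 hj)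
    obtain ⟨t, ht⟩ := hdvd
    have h1 : m / (p.coeff j).den = t := by rw [ht]; exact Nat.mul_div_cancel_left _ (p.coeff j).den_pos
    have h2 : ((p.coeff j).num : ℚ) = (p.coeff j) * (p.coeff j).den := by
      rw [mul_comm]; exact_mod_cast (Rat.den_mul_eq_num (p.coeff j)).symm
    simp only []
    rw [ht] at h1 ⊢
    rw [h1]
    push_cast
    rw [h2]; ring

lemma W_exists (α : ℝ) (k : ℕ) (hk : 0 < k) (u : ℕ → ℤ)
    (hu : α ^ k = ∑ j ∈ Finset.range k, (u j : ℝ) * α ^ j) :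
    ∀ r, ∃ w : ℕ → ℤ, α ^ r = ∑ j ∈ Finset.range k, (w j : ℝ) * α ^ j := by
  intro r
  induction r with
  | zero =>
    refine ⟨fun j => if j = 0 then 1 else 0, ?_⟩
    rw [Finset.sum_congr rfl (fun j _ => by
      rw [show ((if j = 0 then (1:ℤ) else 0 : ℤ) : ℝ) = if j = 0 then (1:ℝ) else 0 by split <;> simp] )]
    rw [Finset.sum_eq_single 0]
    · simp
    · intro b _ hb; simp [hb]
    · intro h; exact absurd (Finset.mem_range.2 hk) h
  | succ r ih =>
    obtain ⟨w, hw⟩ := ih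
    refine ⟨fun j => (if j = 0 then 0 else w (j - 1)) + w (k - 1) * u j, ?_⟩
    have key : α ^ (r + 1) = ∑ j ∈ Finset.range k, (w j : ℝ) * α ^ (j + 1) := by
      rw [pow_succ, hw, Finset.sum_mul]
      exact Finset.sum_congr rfl fun j _ => by ring
    obtain ⟨k', rfl⟩ : ∃ k', k = k' + 1 := ⟨k - 1, (Nat.succ_pred_eq_of_pos hk).symm⟩
    rw [key, Finset.sum_range_succ]
    have h2 : ∑ j ∈ Finset.range (k' + 1),
        ((((if j = 0 then 0 else w (j - 1)) + w (k' + 1 - 1) * u j : ℤ)) : ℝ) * α ^ j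
        = (∑ j ∈ Finset.range (k' + 1), ((if j = 0 then (0:ℝ) else (w (j-1) : ℝ))) * α ^ j)
          + (w k' : ℝ) * ∑ j ∈ Finset.range (k' + 1), (u j : ℝ) * α ^ j := by
      rw [Finset.mul_sum, ← Finset.sum_add_distrib]
      refine Finset.sum_congr rfl fun j _ => ?_
      push_cast
      split <;> ring
    rw [h2, ← hu]
    congr 1
    rw [Finset.sum_range_succ']
    simp only [Nat.add_sub_cancel, if_neg (Nat.succ_ne_zero _)]
    simp

lemma succ_pow_ge (Q s : ℕ) (hQ : 1 ≤ Q) (hs : 1 ≤ s) : Q ^ s + 1 ≤ (Q + 1) ^ s := by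
  induction s with
  | zero => omega
  | succ s ih =>
    rcases Nat.eq_or_lt_of_le hs with h | h
    · simp [← h]
    · have hs' : 1 ≤ s := by omega
      have := ih hs'
      have h1 : (Q + 1) ^ (s + 1) = (Q + 1) ^ s * Q + (Q + 1) ^ s := by ring
      calc Q ^ (s+1) + 1 ≤ (Q^s + 1) * Q + 1 := by
            have : Q ^ (s+1) = Q ^ s * Q := by ring
            nlinarith
        _ ≤ (Q+1)^s * Q + (Q+1)^s := by
            have : 1 ≤ (Q+1)^s := Nat.one_le_pow _ _ (by omega)
            nlinarith
        _ = (Q+1)^(s+1) := by ring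

lemma pigeon (α : ℝ) (k : ℕ) (hk : 2 ≤ k) (Q : ℕ) (hQ : 1 ≤ Q) :
    ∃ e : ℕ → ℤ, (∃ j, 1 ≤ j ∧ j < k ∧ e j ≠ 0) ∧
      (∀ j < k, |(e j : ℝ)| ≤ (2 * k * (1 + |α|) ^ k + 2) * Q) ∧
      |∑ j ∈ Finset.range k, (e j : ℝ) * α ^ j| ≤ ((Q : ℝ) ^ (k - 1))⁻¹ := by
  classical
  set N : ℕ := (Q + 1) ^ (k - 1) with hN
  have hN2 : 2 ≤ N := by
    calc 2 = 2 ^ 1 := rfl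
    _ ≤ 2 ^ (k-1) := Nat.pow_le_pow_right (by omega) (by omega)
    _ ≤ (Q+1) ^ (k-1) := Nat.pow_le_pow_left (by omega) _
  have hNQ : (Q:ℕ) ^ (k-1) ≤ N - 1 := by
    have := succ_pow_ge Q (k-1) hQ (by omega)
    omega
  -- the sample points
  let B : (Fin (k - 1) → Fin (Q + 1)) → ℕ → ℕ := fun b i => if h : i < k - 1 then (b ⟨i, h⟩ : ℕ) else 0
  let v : (Fin (k - 1) → Fin (Q + 1)) → ℝ := fun b => ∑ i ∈ Finset.range (k - 1), (B b i : ℝ) * α ^ (i + 1)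
  have hvb : ∀ b, |v b| ≤ (k : ℝ) * Q * (1 + |α|) ^ k := by
    intro b
    have h1 : |v b| ≤ ∑ i ∈ Finset.range (k-1), |(B b i : ℝ) * α ^ (i+1)| := Finset.abs_sum_le_sum_abs _ _
    have h2 : ∀ i ∈ Finset.range (k-1), |(B b i : ℝ) * α ^ (i+1)| ≤ (Q : ℝ) * (1 + |α|) ^ k := by
      intro i hi
      rw [abs_mul, abs_pow]
      have hB : (B b i : ℝ) ≤ Q := by
        have : B b i ≤ Q := by
          simp only [B]
          split
          · exact Nat.lt_succ_iff.mp (Fin.is_lt _)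
          · omega
        exact_mod_cast this
      have hα : |α| ^ (i+1) ≤ (1 + |α|) ^ k := by
        calc |α| ^ (i+1) ≤ (1 + |α|) ^ (i+1) :=
              pow_le_pow_left₀ (abs_nonneg _) (by linarith) _
          _ ≤ (1 + |α|) ^ k := pow_le_pow_right₀ (by linarith [abs_nonneg α])
              (by have := Finset.mem_range.1 hi; omega)
      have := abs_nonneg ((B b i : ℝ))
      calc |(B b i : ℝ)| * |α| ^ (i+1) = (B b i : ℝ) * |α| ^ (i+1) := by
            rw [abs_of_nonneg (by positivity)]
        _ ≤ (Q : ℝ) * (1 + |α|) ^ k := by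
            apply mul_le_mul hB hα (by positivity) (by positivity)
      
    calc |v b| ≤ ∑ i ∈ Finset.range (k-1), |(B b i : ℝ) * α ^ (i+1)| := h1
      _ ≤ ∑ i ∈ Finset.range (k-1), (Q : ℝ) * (1 + |α|) ^ k := Finset.sum_le_sum h2
      _ = (k - 1 : ℕ) * ((Q:ℝ) * (1 + |α|) ^ k) := by rw [Finset.sum_const, nsmul_eq_mul, Finset.card_range]
      _ ≤ (k : ℝ) * Q * (1 + |α|) ^ k := by
          have h3 : ((k-1 : ℕ):ℝ) ≤ (k:ℝ) := by exact_mod_cast Nat.sub_le k 1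
          have h4 : (0:ℝ) ≤ (Q:ℝ) * (1 + |α|)^k := by positivity
          nlinarith
  -- pigeonhole map
  have hfr : ∀ b, (0:ℝ) ≤ ((N:ℝ) - 1) * Int.fract (v b) ∧ ((N:ℝ)-1) * Int.fract (v b) < (N:ℝ) - 1 := by
    intro b
    constructor
    · have := Int.fract_nonneg (v b)
      have : (0:ℝ) ≤ (N:ℝ) - 1 := by
        have : (1:ℝ) ≤ (N:ℝ) := by exact_mod_cast (by omega : 1 ≤ N)
        linarith
      positivity
    · have h1 := Int.fract_lt_one (v b)
      have h2 : (0:ℝ) < (N:ℝ) - 1 := by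
        have : (2:ℝ) ≤ (N:ℝ) := by exact_mod_cast hN2
        linarith
      nlinarith
  let g : (Fin (k - 1) → Fin (Q + 1)) → Fin (N - 1) := fun b =>
    ⟨(⌊((N:ℝ) - 1) * Int.fract (v b)⌋).toNat, by
      have h := hfr b
      have h1 : ⌊((N:ℝ) - 1) * Int.fract (v b)⌋ < ((N:ℤ) - 1) := by
        rw [Int.floor_lt]; push_cast; exact h.2
      omega⟩
  have hcard : Fintype.card (Fin (N - 1)) < Fintype.card (Fin (k - 1) → Fin (Q + 1)) := by
    rw [Fintype.card_fin, Fintype.card_fun, Fintype.card_fin, Fintype.card_fin]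
    omega
  obtain ⟨b, b', hbb, hg⟩ := Fintype.exists_ne_map_eq_of_card_lt g hcard
  -- the small linear form
  have hfloor : ⌊((N:ℝ) - 1) * Int.fract (v b)⌋ = ⌊((N:ℝ) - 1) * Int.fract (v b')⌋ := by
    have h1 := (hfr b).1; have h2 := (hfr b').1
    have e1 : (⌊((N:ℝ) - 1) * Int.fract (v b)⌋).toNat = (⌊((N:ℝ) - 1) * Int.fract (v b')⌋).toNat :=
      congrArg Fin.val hg
    have f1 : 0 ≤ ⌊((N:ℝ) - 1) * Int.fract (v b)⌋ := Int.floor_nonneg.2 h1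
    have f2 : 0 ≤ ⌊((N:ℝ) - 1) * Int.fract (v b')⌋ := Int.floor_nonneg.2 h2
    omega
  have hsmall : |Int.fract (v b) - Int.fract (v b')| ≤ ((Q:ℝ) ^ (k-1))⁻¹ := by
    have h1 : |((N:ℝ) - 1) * Int.fract (v b) - ((N:ℝ)-1) * Int.fract (v b')| < 1 :=
      Int.abs_sub_lt_one_of_floor_eq_floor hfloor
    have hN1 : (0:ℝ) < (N:ℝ) - 1 := by
      have : (2:ℝ) ≤ (N:ℝ) := by exact_mod_cast hN2; 
      linarith
    have h2 : |Int.fract (v b) - Int.fract (v b')| < ((N:ℝ) - 1)⁻¹ := by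
      rw [← mul_sub, abs_mul, abs_of_pos hN1, mul_comm] at h1
      rw [inv_eq_one_div, lt_div_iff₀ hN1]
      exact h1
    have h3 : ((N:ℝ) - 1)⁻¹ ≤ ((Q:ℝ)^(k-1))⁻¹ := by
      have hQk : (0:ℝ) < (Q:ℝ)^(k-1) := by positivity
      apply inv_anti₀ hQk
      have : ((Q^(k-1) : ℕ) : ℝ) ≤ ((N - 1 : ℕ) : ℝ) := Nat.cast_le.2 hNQ
      rw [Nat.cast_sub (by omega : 1 ≤ N)] at this
      push_cast at this ⊢
      linarith
    linarith
  -- build the coefficient vector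
  have hBQ : ∀ b i, B b i ≤ Q := by
    intro b i
    simp only [B]
    split
    · exact Nat.lt_succ_iff.mp (Fin.is_lt _)
    · omega
  set e : ℕ → ℤ := fun j => if j = 0 then (⌊v b'⌋ - ⌊v b⌋) else ((B b (j-1) : ℤ) - (B b' (j-1) : ℤ)) with he
  have habsfloor : ∀ x : ℝ, |((⌊x⌋ : ℤ) : ℝ)| ≤ |x| + 1 := fun x =>
    abs_le.2 ⟨by linarith [Int.sub_one_lt_floor x, neg_abs_le x],
      by linarith [Int.floor_le x, le_abs_self x]⟩
  refine ⟨e, ?_, ?_, ?_⟩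
  · obtain ⟨i, hi⟩ := Function.ne_iff.1 hbb
    refine ⟨(i:ℕ) + 1, by omega, by have := i.is_lt; omega, ?_⟩
    have hlt : ((i:ℕ) + 1 - 1) < k - 1 := by have := i.is_lt; omega
    simp only [e, Nat.add_sub_cancel, if_neg (Nat.succ_ne_zero _)]
    simp only [B, dif_pos i.is_lt]
    intro hcon
    apply hi
    have : ((b ⟨(i:ℕ), i.is_lt⟩ : ℕ) : ℤ) = ((b' ⟨(i:ℕ), i.is_lt⟩ : ℕ) : ℤ) := by
      have := sub_eq_zero.1 hcon
      simpa [Fin.eta] using this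
    have hval : (b i : ℕ) = (b' i : ℕ) := by
      exact_mod_cast (by simpa [Fin.eta] using this)
    exact Fin.val_injective hval
  · intro j hj
    have hconst1 : (1:ℝ) ≤ 2 * (k:ℝ) * (1 + |α|) ^ k + 2 := by
      have h0 : (0:ℝ) ≤ 2 * (k:ℝ) * (1 + |α|)^k := by positivity
      linarith
    have hQ1 : (1:ℝ) ≤ (Q:ℝ) := by exact_mod_cast hQ
    rcases Nat.eq_zero_or_pos j with rfl | hjpos
    · simp only [e, if_pos rfl]
      have f1 := habsfloor (v b')
      have f2 := habsfloor (v b)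
      have g1 := hvb b
      have g2 := hvb b'
      have hk0 : (0:ℝ) ≤ (k:ℝ) := by positivity
      have hp0 : (0:ℝ) ≤ (1+|α|)^k := by positivity
      push_cast
      calc |((⌊v b'⌋ : ℤ) : ℝ) - ((⌊v b⌋ : ℤ) : ℝ)| ≤ |v b'| + 1 + (|v b| + 1) := by
            calc |((⌊v b'⌋ : ℤ) : ℝ) - ((⌊v b⌋ : ℤ) : ℝ)|
                ≤ |((⌊v b'⌋ : ℤ) : ℝ)| + |((⌊v b⌋ : ℤ) : ℝ)| := abs_sub _ _
              _ ≤ |v b'| + 1 + (|v b| + 1) := by linarith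
        _ ≤ (2 * (k:ℝ) * (1 + |α|)^k + 2) * Q := by nlinarith
    · simp only [e, if_neg (by omega : ¬ j = 0)]
      push_cast
      have h1 : |((B b (j-1) : ℝ)) - (B b' (j-1) : ℝ)| ≤ (Q:ℝ) := by
        have e1 : (B b (j-1) : ℝ) ≤ Q := by exact_mod_cast hBQ b (j-1)
        have e2 : (B b' (j-1) : ℝ) ≤ Q := by exact_mod_cast hBQ b' (j-1)
        have e3 : (0:ℝ) ≤ (B b (j-1) : ℝ) := by positivity
        have e4 : (0:ℝ) ≤ (B b' (j-1) : ℝ) := by positivity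
        rw [abs_sub_le_iff]
        constructor <;> linarith
      calc |((B b (j-1) : ℝ)) - (B b' (j-1) : ℝ)| ≤ (Q:ℝ) := h1
        _ ≤ (2 * (k:ℝ) * (1 + |α|)^k + 2) * Q := by nlinarith
  · obtain ⟨k', rfl⟩ : ∃ k', k = k' + 1 := ⟨k - 1, by omega⟩
    have h0 : ((e 0 : ℤ) : ℝ) * α ^ 0 = ((⌊v b'⌋ : ℤ) : ℝ) - ((⌊v b⌋ : ℤ) : ℝ) := by
      simp [e]
    have hsucc : ∀ i, ((e (i+1) : ℤ) : ℝ) * α ^ (i+1) = ((B b i : ℝ) - (B b' i : ℝ)) * α ^ (i+1) := by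
      intro i
      simp only [e, Nat.add_sub_cancel, if_neg (Nat.succ_ne_zero _)]
      push_cast
      ring
    have hvv : ∑ i ∈ Finset.range k', (((B b i : ℝ) - (B b' i : ℝ)) * α ^ (i+1)) = v b - v b' := by
      simp only [v, Nat.add_sub_cancel]
      rw [← Finset.sum_sub_distrib]
      exact Finset.sum_congr rfl fun i hi => by ring
    have hsum : ∑ j ∈ Finset.range (k' + 1), ((e j : ℤ) : ℝ) * α ^ j
        = Int.fract (v b) - Int.fract (v b') := by
      rw [Finset.sum_range_succ', h0, Finset.sum_congr rfl (fun i _ => hsucc i), hvv]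
      unfold Int.fract
      push_cast
      ring
    rw [hsum]
    exact hsmall

set_option maxHeartbeats 3200000 in
/-- **Simultaneous approximation by elements of `ℤ[θ]` (ubiquity, Example 2).**
Let `θ` be a real algebraic number of degree `k ≥ 2` over `ℚ`. Then there is a constant `C > 0`,
depending only on `θ`, such that for every `x ∈ [0,1]` and every `n ≥ 0` there are integers
`a_0, …, a_{k−1}` with `|a_i| ≤ C·2^n` and
`|2^n x − (a_0 + a_1 θ + ⋯ + a_{k−1} θ^{k−1})| ≤ C·2^{−n(k−1)}`. -/
theorem algebraic_landmark_ubiquity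
    (θ : ℝ) (k : ℕ) (hk : 2 ≤ k)
    (halg : IsAlgebraic ℚ θ) (hdeg : (minpoly ℚ θ).natDegree = k) :
    ∃ C : ℝ, 0 < C ∧ ∀ x ∈ Set.Icc (0 : ℝ) 1, ∀ n : ℕ,
      ∃ a : Fin k → ℤ,
        (∀ i, |(a i : ℝ)| ≤ C * 2 ^ n) ∧
        |2 ^ n * x - ∑ i : Fin k, (a i : ℝ) * θ ^ (i : ℕ)| ≤
          C * (2 : ℝ) ^ (-((n : ℤ) * ((k : ℤ) - 1))) := by
  classical
  have hk1 : 0 < k := by omega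
  set p := minpoly ℚ θ with hp
  have hmonic : p.Monic := minpoly.monic halg.isIntegral
  -- the basic relation θ^k = -∑_{j<k} p_j θ^j
  have hθk : θ ^ k = -∑ j ∈ Finset.range k, ((p.coeff j : ℚ) : ℝ) * θ ^ j := by
    have h0 : Polynomial.aeval θ p = 0 := minpoly.aeval ℚ θ
    rw [Polynomial.aeval_eq_sum_range, hdeg, Finset.sum_range_succ] at h0
    have hck : p.coeff k = 1 := by
      have := hmonic.coeff_natDegree
      rwa [hdeg] at this
    rw [hck] at h0
    have : ∀ j ∈ Finset.range k, (p.coeff j) • θ ^ j = ((p.coeff j : ℚ) : ℝ) * θ ^ j :=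
      fun j _ => Rat.smul_def _ _
    rw [Finset.sum_congr rfl this] at h0
    simp only [one_smul] at h0
    linarith [h0]
  -- clear denominators
  obtain ⟨m, c, hm, hc⟩ := clear_denoms p k
  set α : ℝ := (m : ℝ) * θ with hα
  have hmR : (1:ℝ) ≤ (m:ℝ) := by exact_mod_cast hm
  -- integral relation for α
  have hu : α ^ k = ∑ j ∈ Finset.range k, ((-(c j) * (m:ℤ)^(k - 1 - j) : ℤ) : ℝ) * α ^ j := by
    have hterm : ∀ j ∈ Finset.range k,
        ((-(c j) * (m:ℤ)^(k - 1 - j) : ℤ) : ℝ) * α ^ j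
          = -(((p.coeff j : ℚ)):ℝ) * (m:ℝ)^k * θ ^ j := by
      intro j hj
      have hj' := Finset.mem_range.1 hj
      have hcj : ((c j : ℚ) : ℝ) = (m:ℝ) * ((p.coeff j : ℚ) : ℝ) := by
        have := hc j hj'
        exact_mod_cast congrArg (fun q : ℚ => (q : ℝ)) this
      have hpow : (m:ℝ)^(k - 1 - j) * (m:ℝ)^j * (m:ℝ) = (m:ℝ)^k := by
        rw [← pow_add, ← pow_succ]
        congr 1
        omega
      push_cast
      rw [hα, mul_pow]
      have hcj' : ((c j : ℤ) : ℝ) = (m:ℝ) * ((p.coeff j : ℚ) : ℝ) := by exact_mod_cast hcj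
      rw [hcj']
      linear_combination (-(((p.coeff j : ℚ) : ℝ)) * θ ^ j) * hpow
    rw [Finset.sum_congr rfl hterm]
    have h5 : ∑ j ∈ Finset.range k, -(((p.coeff j : ℚ)):ℝ) * (m:ℝ)^k * θ ^ j
        = (m:ℝ)^k * -(∑ j ∈ Finset.range k, ((p.coeff j : ℚ) : ℝ) * θ ^ j) := by
      rw [mul_neg, Finset.mul_sum, ← Finset.sum_neg_distrib]
      exact Finset.sum_congr rfl fun j _ => by ring
    rw [h5, ← hθk, hα, mul_pow]
  set u : ℕ → ℤ := fun j => -(c j) * (m:ℤ)^(k - 1 - j) with hudef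
  -- the reduction matrix W
  choose W hW using W_exists α k hk1 u hu
  -- independence over ℚ for powers of α
  have haind : ∀ d : ℕ → ℚ, (∑ j ∈ Finset.range k, (d j : ℝ) * α ^ j = 0) → ∀ j < k, d j = 0 := by
    intro d hd j hj
    have h2 : ∑ j ∈ Finset.range k, ((d j * (m:ℚ)^j : ℚ) : ℝ) * θ ^ j = 0 := by
      rw [← hd]
      refine Finset.sum_congr rfl fun j _ => ?_
      rw [hα, mul_pow]
      push_cast
      ring
    have := powers_indep_aux θ k hk1 hdeg _ h2 j hj
    have hm0 : ((m:ℚ))^j ≠ 0 := by positivity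
    exact (mul_eq_zero.1 this).resolve_right hm0
  -- constants
  set A : ℝ := (1 + |α|) ^ k with hA
  have hA1 : (1:ℝ) ≤ A := one_le_pow₀ (by linarith [abs_nonneg α])
  set Bw : ℝ := 1 + ∑ r ∈ Finset.range (2*k), ∑ j ∈ Finset.range k, |(W r j : ℝ)| with hBw
  have hBw1 : (1:ℝ) ≤ Bw := by
    have : (0:ℝ) ≤ ∑ r ∈ Finset.range (2*k), ∑ j ∈ Finset.range k, |(W r j : ℝ)| :=
      Finset.sum_nonneg fun r _ => Finset.sum_nonneg fun j _ => abs_nonneg _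
    simp only [hBw]; linarith
  have hWb : ∀ r < 2*k, ∀ j < k, |(W r j : ℝ)| ≤ Bw := by
    intro r hr j hj
    have h1 : |(W r j : ℝ)| ≤ ∑ j' ∈ Finset.range k, |(W r j' : ℝ)| :=
      Finset.single_le_sum (f := fun j' => |(W r j' : ℝ)|)
        (fun i _ => abs_nonneg _) (Finset.mem_range.2 hj)
    have h2 : ∑ j ∈ Finset.range k, |(W r j : ℝ)|
        ≤ ∑ r ∈ Finset.range (2*k), ∑ j ∈ Finset.range k, |(W r j : ℝ)| :=
      Finset.single_le_sum (f := fun r => ∑ j ∈ Finset.range k, |(W r j : ℝ)|)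
        (fun i _ => Finset.sum_nonneg fun j _ => abs_nonneg _) (Finset.mem_range.2 hr)
    simp only [hBw]; linarith
  set C₀ : ℝ := 2 * k * (1 + |α|) ^ k + 2 with hC₀
  have hC₀1 : (1:ℝ) ≤ C₀ := by
    have : (0:ℝ) ≤ 2 * k * (1+|α|)^k := by positivity
    simp only [hC₀]; linarith
  set B₂ : ℝ := k * (C₀ * Bw) with hB₂
  have hB₂0 : 0 < B₂ := by
    simp only [hB₂]
    have h1 : (0:ℝ) < k := by exact_mod_cast hk1
    exact mul_pos h1 (mul_pos (by linarith) (by linarith))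
  set C : ℝ := (m:ℝ)^k * (1 + k*B₂/2 + k * B₂) + (k/2) * A + 1 with hC
  have hC0 : 0 < C := by
    have h1 : (0:ℝ) ≤ (m:ℝ)^k := by positivity
    have h2 : (0:ℝ) ≤ (k:ℝ) := by positivity
    simp only [hC]
    have h3 : (0:ℝ) ≤ k * B₂ := mul_nonneg h2 hB₂0.le
    have h4 : (0:ℝ) ≤ (1 + k*B₂/2 + k*B₂) := by linarith
    have h5 : (0:ℝ) ≤ (m:ℝ)^k * (1 + k*B₂/2 + k*B₂) := mul_nonneg h1 h4
    have h6 : (0:ℝ) ≤ (k/2) * A := mul_nonneg (by linarith) (by linarith)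
    linarith
  refine ⟨C, hC0, ?_⟩
  intro x hx n
  set Q : ℕ := 2 ^ n with hQdef
  have hQ : 1 ≤ Q := Nat.one_le_two_pow
  have hQR : (1:ℝ) ≤ (Q:ℝ) := by exact_mod_cast hQ
  obtain ⟨e, ⟨j₀, hj₀1, hj₀k, hj₀ne⟩, hebound, hesmall⟩ := pigeon α k hk Q hQ
  set ε : ℝ := ∑ j ∈ Finset.range k, (e j : ℝ) * α ^ j with hε
  have hε0 : ε ≠ 0 := by
    intro h0
    have := haind (fun j => (e j : ℚ)) (by
      rw [← h0, hε]; exact Finset.sum_congr rfl fun j _ => by push_cast; ring) j₀ hj₀k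
    exact hj₀ne (by simpa using this)
  -- the coefficient matrix
  set g : ℕ → ℕ → ℤ := fun i l => ∑ j ∈ Finset.range k, e j * W (j + i) l with hg
  set G : Matrix (Fin k) (Fin k) ℝ := fun i l => ((g i l : ℤ) : ℝ) with hG
  have hGval : ∀ i : ℕ, ε * α ^ i = ∑ l ∈ Finset.range k, (g i l : ℝ) * α ^ l := by
    intro i
    rw [hε, Finset.sum_mul]
    calc ∑ j ∈ Finset.range k, (e j : ℝ) * α ^ j * α ^ i
        = ∑ j ∈ Finset.range k, (e j : ℝ) * ∑ l ∈ Finset.range k, (W (j+i) l : ℝ) * α ^ l := by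
          refine Finset.sum_congr rfl fun j _ => ?_
          rw [mul_assoc, ← pow_add, hW (j+i)]
      _ = ∑ j ∈ Finset.range k, ∑ l ∈ Finset.range k, (e j : ℝ) * (W (j+i) l : ℝ) * α ^ l := by
          refine Finset.sum_congr rfl fun j _ => ?_
          rw [Finset.mul_sum]
          exact Finset.sum_congr rfl fun l _ => by ring
      _ = ∑ l ∈ Finset.range k, ∑ j ∈ Finset.range k, (e j : ℝ) * (W (j+i) l : ℝ) * α ^ l :=
          Finset.sum_comm
      _ = ∑ l ∈ Finset.range k, (g i l : ℝ) * α ^ l := by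
          refine Finset.sum_congr rfl fun l _ => ?_
          simp only [hg]
          push_cast
          rw [Finset.sum_mul]
  have hGbound : ∀ i < k, ∀ l < k, |(g i l : ℝ)| ≤ B₂ * Q := by
    intro i hi l hl
    have h1 : (g i l : ℝ) = ∑ j ∈ Finset.range k, (e j : ℝ) * (W (j+i) l : ℝ) := by
      simp only [hg]; push_cast; rfl
    rw [h1]
    calc |∑ j ∈ Finset.range k, (e j : ℝ) * (W (j+i) l : ℝ)|
        ≤ ∑ j ∈ Finset.range k, |(e j : ℝ) * (W (j+i) l : ℝ)| := Finset.abs_sum_le_sum_abs _ _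
      _ ≤ ∑ j ∈ Finset.range k, (C₀ * Q) * Bw := by
          refine Finset.sum_le_sum fun j hj => ?_
          have hj' := Finset.mem_range.1 hj
          rw [abs_mul]
          exact mul_le_mul (hebound j hj') (hWb (j+i) (by omega) l hl)
            (abs_nonneg _) (by positivity)
      _ = (k : ℝ) * ((C₀ * Q) * Bw) := by rw [Finset.sum_const, nsmul_eq_mul, Finset.card_range]
      _ = B₂ * Q := by simp only [hB₂]; ring
  -- G is invertible
  have hdet : IsUnit G.det := by
    set Gz : Matrix (Fin k) (Fin k) ℤ := fun i l => g (i:ℕ) (l:ℕ) with hGz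
    set Gq : Matrix (Fin k) (Fin k) ℚ := fun i l => ((g (i:ℕ) (l:ℕ) : ℤ) : ℚ) with hGq
    have hker : ∀ q : Fin k → ℚ, Matrix.vecMul q Gq = 0 → q = 0 := by
      intro q hq
      set d : ℕ → ℚ := fun j => if h : j < k then q ⟨j, h⟩ else 0 with hd
      have hcol : ∀ l : Fin k, ∑ j ∈ Finset.range k, d j * (g j (l:ℕ) : ℚ) = 0 := by
        intro l
        have h2 := congrFun hq l
        simp only [Matrix.vecMul, dotProduct, Pi.zero_apply] at h2
        rw [← h2, ← Fin.sum_univ_eq_sum_range (fun j => d j * (g j (l:ℕ) : ℚ)) k]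
        refine Finset.sum_congr rfl fun i _ => ?_
        simp only [hd, dif_pos i.isLt, Fin.eta, hGq]
      have hsum0 : ∑ j ∈ Finset.range k, (d j : ℝ) * α ^ j = 0 := by
        have hmul : ε * ∑ j ∈ Finset.range k, (d j : ℝ) * α ^ j = 0 := by
          rw [Finset.mul_sum]
          calc ∑ j ∈ Finset.range k, ε * ((d j : ℝ) * α ^ j)
              = ∑ j ∈ Finset.range k, (d j : ℝ) * (ε * α ^ j) := by
                exact Finset.sum_congr rfl fun j _ => by ring
            _ = ∑ j ∈ Finset.range k, (d j : ℝ) * ∑ l ∈ Finset.range k, (g j l : ℝ) * α ^ l := by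
                exact Finset.sum_congr rfl fun j _ => by rw [hGval j]
            _ = ∑ j ∈ Finset.range k, ∑ l ∈ Finset.range k, (d j : ℝ) * (g j l : ℝ) * α ^ l := by
                refine Finset.sum_congr rfl fun j _ => ?_
                rw [Finset.mul_sum]
                exact Finset.sum_congr rfl fun l _ => by ring
            _ = ∑ l ∈ Finset.range k, (((∑ j ∈ Finset.range k, d j * (g j l : ℚ)) : ℚ) : ℝ) * α ^ l := by
                rw [Finset.sum_comm]
                refine Finset.sum_congr rfl fun l _ => ?_
                push_cast
                rw [Finset.sum_mul]
            _ = 0 := by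
                refine Finset.sum_eq_zero fun l hl => ?_
                have hl' := Finset.mem_range.1 hl
                rw [show (∑ j ∈ Finset.range k, d j * (g j l : ℚ)) = 0 from hcol ⟨l, hl'⟩]
                simp
        exact (mul_eq_zero.1 hmul).resolve_left hε0
      have hd0 := haind d hsum0
      funext i
      have := hd0 (i:ℕ) i.isLt
      simpa [hd, dif_pos i.isLt] using this
    have hinj : Function.Injective Gq.vecMul := by
      intro v w hvw
      simp only at hvw
      have h3 : Matrix.vecMul (v - w) Gq = 0 := by
        rw [Matrix.sub_vecMul, hvw, sub_self]
      have := hker _ h3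
      exact sub_eq_zero.1 this
    have hGqunit : IsUnit Gq := Matrix.vecMul_injective_iff_isUnit.1 hinj
    have hGqdet : Gq.det ≠ 0 := by
      have := (Matrix.isUnit_iff_isUnit_det _).1 hGqunit
      exact IsUnit.ne_zero this
    have hzdet' : Gz.det ≠ 0 := by
      intro h
      apply hGqdet
      have hmap : Gq = (Int.castRingHom ℚ).mapMatrix Gz := rfl
      rw [hmap, ← RingHom.map_det, h]
      simp
    have hGdet : G.det = ((Gz.det : ℤ) : ℝ) := by
      have hmap : G = (Int.castRingHom ℝ).mapMatrix Gz := rfl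
      rw [hmap, ← RingHom.map_det]
      simp
    rw [isUnit_iff_ne_zero, hGdet]
    exact_mod_cast hzdet'
  -- solve the linear system and round
  set δ : Fin k → ℝ := fun l => if (l : ℕ) = 0 then (2:ℝ)^n * x else 0 with hδ
  set s : Fin k → ℝ := Matrix.vecMul δ G⁻¹ with hs
  have hsG : Matrix.vecMul s G = δ := by
    rw [hs, Matrix.vecMul_vecMul, Matrix.nonsing_inv_mul G hdet, Matrix.vecMul_one]
  set t : Fin k → ℤ := fun i => round (s i) with ht
  have htclose : ∀ i, |(t i : ℝ) - s i| ≤ 1/2 := by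
    intro i
    rw [abs_sub_comm]
    exact abs_sub_round (s i)
  set γ : Fin k → ℤ := fun l => ∑ i : Fin k, t i * g (i:ℕ) (l:ℕ) with hγ
  set ξ : ℝ := ∑ i : Fin k, (t i : ℝ) * (ε * α ^ (i:ℕ)) with hξ
  have hQcast : ((Q:ℕ):ℝ) = (2:ℝ)^n := by rw [hQdef]; push_cast; ring
  have hQ0 : (0:ℝ) < (Q:ℝ) := by linarith
  -- ξ in terms of γ
  have hξγ : ξ = ∑ l : Fin k, (γ l : ℝ) * α ^ (l:ℕ) := by
    rw [hξ]
    calc ∑ i : Fin k, (t i : ℝ) * (ε * α ^ (i:ℕ))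
        = ∑ i : Fin k, ∑ l ∈ Finset.range k, (t i : ℝ) * ((g (i:ℕ) l : ℝ) * α ^ l) := by
          refine Finset.sum_congr rfl fun i _ => ?_
          rw [hGval (i:ℕ), Finset.mul_sum]
      _ = ∑ l ∈ Finset.range k, ∑ i : Fin k, (t i : ℝ) * ((g (i:ℕ) l : ℝ) * α ^ l) :=
          Finset.sum_comm
      _ = ∑ l : Fin k, (γ l : ℝ) * α ^ (l:ℕ) := by
          rw [← Fin.sum_univ_eq_sum_range
            (fun l => ∑ i : Fin k, (t i : ℝ) * ((g (i:ℕ) l : ℝ) * α ^ l)) k]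
          refine Finset.sum_congr rfl fun l _ => ?_
          simp only [hγ]
          push_cast
          rw [Finset.sum_mul]
          exact Finset.sum_congr rfl fun i _ => by ring
  have hvecMul : ∀ (w : Fin k → ℝ) (l : Fin k),
      Matrix.vecMul w G l = ∑ i : Fin k, w i * (g (i:ℕ) (l:ℕ) : ℝ) := by
    intro w l
    simp only [Matrix.vecMul, dotProduct, hG]
  -- the exact solution hits the target
  have hexact : ∑ i : Fin k, s i * (ε * α ^ (i:ℕ)) = (2:ℝ)^n * x := by
    calc ∑ i : Fin k, s i * (ε * α ^ (i:ℕ))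
        = ∑ i : Fin k, ∑ l ∈ Finset.range k, s i * ((g (i:ℕ) l : ℝ) * α ^ l) := by
          refine Finset.sum_congr rfl fun i _ => ?_
          rw [hGval (i:ℕ), Finset.mul_sum]
      _ = ∑ l ∈ Finset.range k, ∑ i : Fin k, s i * ((g (i:ℕ) l : ℝ) * α ^ l) :=
          Finset.sum_comm
      _ = ∑ l : Fin k, δ l * α ^ (l:ℕ) := by
          rw [← Fin.sum_univ_eq_sum_range
            (fun l => ∑ i : Fin k, s i * ((g (i:ℕ) l : ℝ) * α ^ l)) k]
          refine Finset.sum_congr rfl fun l _ => ?_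
          rw [← congrFun hsG l, hvecMul s l, Finset.sum_mul]
          exact Finset.sum_congr rfl fun i _ => by ring
      _ = (2:ℝ)^n * x := by
          rw [Finset.sum_eq_single (⟨0, hk1⟩ : Fin k)]
          · simp [hδ]
          · intro l _ hl
            have : (l : ℕ) ≠ 0 := fun h => hl (Fin.ext h)
            simp [hδ, this]
          · intro h; exact absurd (Finset.mem_univ _) h
  -- error in value
  have hval : |(2:ℝ)^n * x - ξ| ≤ (k/2) * A * ((Q:ℝ)^(k-1))⁻¹ := by
    have hsub : (2:ℝ)^n * x - ξ = ∑ i : Fin k, (s i - (t i : ℝ)) * (ε * α ^ (i:ℕ)) := by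
      rw [← hexact, hξ, ← Finset.sum_sub_distrib]
      exact Finset.sum_congr rfl fun i _ => by ring
    have hεb : |ε| ≤ ((Q:ℝ)^(k-1))⁻¹ := by rw [hε]; exact hesmall
    have hterm : ∀ i : Fin k, |(s i - (t i : ℝ)) * (ε * α ^ (i:ℕ))|
        ≤ (1/2) * (((Q:ℝ)^(k-1))⁻¹ * A) := by
      intro i
      rw [abs_mul, abs_mul, abs_pow]
      have h1 : |s i - (t i : ℝ)| ≤ 1/2 := by rw [abs_sub_comm]; exact htclose i
      have h2 : |α| ^ (i:ℕ) ≤ A := by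
        rw [hA]
        calc |α| ^ (i:ℕ) ≤ (1 + |α|) ^ (i:ℕ) :=
              pow_le_pow_left₀ (abs_nonneg _) (by linarith [abs_nonneg α]) _
          _ ≤ (1 + |α|) ^ k := pow_le_pow_right₀ (by linarith [abs_nonneg α]) i.isLt.le
      have h3 : |ε| * |α| ^ (i:ℕ) ≤ ((Q:ℝ)^(k-1))⁻¹ * A :=
        mul_le_mul hεb h2 (by positivity) (by positivity)
      exact mul_le_mul h1 h3 (by positivity) (by norm_num)
    calc |(2:ℝ)^n * x - ξ| ≤ ∑ i : Fin k, |(s i - (t i : ℝ)) * (ε * α ^ (i:ℕ))| := by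
          rw [hsub]; exact Finset.abs_sum_le_sum_abs _ _
      _ ≤ ∑ _i : Fin k, (1/2) * (((Q:ℝ)^(k-1))⁻¹ * A) := Finset.sum_le_sum fun i _ => hterm i
      _ = (k:ℝ) * ((1/2) * (((Q:ℝ)^(k-1))⁻¹ * A)) := by
          rw [Finset.sum_const, nsmul_eq_mul, Finset.card_univ, Fintype.card_fin]
      _ = (k/2) * A * ((Q:ℝ)^(k-1))⁻¹ := by ring
  -- error in coefficients
  have hkB₂0 : (0:ℝ) ≤ (k:ℝ) * B₂ := mul_nonneg (by positivity) hB₂0.le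
  have hcoef : ∀ l : Fin k, |(γ l : ℝ)| ≤ (1 + k*B₂/2 + k*B₂) * Q := by
    intro l
    have hγδ : (γ l : ℝ) - δ l = ∑ i : Fin k, ((t i : ℝ) - s i) * (g (i:ℕ) (l:ℕ) : ℝ) := by
      rw [← congrFun hsG l, hvecMul s l]
      have hγR : (γ l : ℝ) = ∑ i : Fin k, (t i : ℝ) * (g (i:ℕ) (l:ℕ) : ℝ) := by
        simp only [hγ]; push_cast; rfl
      rw [hγR, ← Finset.sum_sub_distrib]
      exact Finset.sum_congr rfl fun i _ => by ring
    have hδb : |δ l| ≤ (Q:ℝ) := by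
      have hp2 : (0:ℝ) < (2:ℝ)^n := pow_pos (by norm_num) n
      have hxx : (0:ℝ) ≤ (2:ℝ)^n * x := mul_nonneg hp2.le hx.1
      have hxx2 : (2:ℝ)^n * x ≤ (Q:ℝ) := by rw [hQcast]; nlinarith [hx.2]
      simp only [hδ]
      by_cases h : (l:ℕ) = 0
      · rw [if_pos h, abs_of_nonneg hxx]; exact hxx2
      · rw [if_neg h, abs_zero]; linarith
    have herr : |(γ l : ℝ) - δ l| ≤ (k:ℝ) * (B₂ * Q) / 2 := by
      rw [hγδ]
      calc |∑ i : Fin k, ((t i : ℝ) - s i) * (g (i:ℕ) (l:ℕ) : ℝ)|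
          ≤ ∑ i : Fin k, |((t i : ℝ) - s i) * (g (i:ℕ) (l:ℕ) : ℝ)| :=
            Finset.abs_sum_le_sum_abs _ _
        _ ≤ ∑ _i : Fin k, (1/2) * (B₂ * Q) := by
            refine Finset.sum_le_sum fun i _ => ?_
            rw [abs_mul]
            exact mul_le_mul (htclose i) (hGbound (i:ℕ) i.isLt (l:ℕ) l.isLt)
              (abs_nonneg _) (by norm_num)
        _ = (k:ℝ) * ((1/2) * (B₂ * Q)) := by
            rw [Finset.sum_const, nsmul_eq_mul, Finset.card_univ, Fintype.card_fin]
        _ = (k:ℝ) * (B₂ * Q) / 2 := by ring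
    have h4 : |(γ l : ℝ)| ≤ |δ l| + |(γ l : ℝ) - δ l| := by
      calc |(γ l : ℝ)| = |δ l + ((γ l : ℝ) - δ l)| := by ring_nf
        _ ≤ |δ l| + |(γ l : ℝ) - δ l| := abs_add_le _ _
    have h5 : (k:ℝ) * (B₂ * Q) / 2 = (k * B₂ / 2) * Q := by ring
    nlinarith [mul_nonneg hkB₂0 hQ0.le]
  -- final answer
  refine ⟨fun i => γ i * (m:ℤ)^(i:ℕ), ?_, ?_⟩
  · intro i
    push_cast
    rw [abs_mul, abs_pow, abs_of_nonneg (by positivity : (0:ℝ) ≤ (m:ℝ))]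
    have h1 : (m:ℝ)^(i:ℕ) ≤ (m:ℝ)^k := pow_le_pow_right₀ hmR i.isLt.le
    have h2 : |(γ i : ℝ)| * (m:ℝ)^(i:ℕ) ≤ ((1 + k*B₂/2 + k*B₂) * Q) * (m:ℝ)^k :=
      mul_le_mul (hcoef i) h1 (by positivity) (by positivity)
    have h3 : ((1 + k*B₂/2 + k*B₂) * Q) * (m:ℝ)^k ≤ C * Q := by
      have hCge : (m:ℝ)^k * (1 + k*B₂/2 + k*B₂) ≤ C := by
        simp only [hC]
        have : (0:ℝ) ≤ (k/2) * A := mul_nonneg (by positivity) (by linarith)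
        linarith
      nlinarith [hQ0, hCge]
    rw [← hQcast]
    exact le_trans h2 h3
  · have hsumθ : ∑ i : Fin k, ((γ i * (m:ℤ)^(i:ℕ) : ℤ) : ℝ) * θ ^ (i:ℕ) = ξ := by
      rw [hξγ]
      refine Finset.sum_congr rfl fun i _ => ?_
      push_cast
      rw [hα, mul_pow]
      ring
    rw [hsumθ]
    have hzpow : (2:ℝ) ^ (-((n:ℤ) * ((k:ℤ) - 1))) = ((Q:ℝ)^(k-1))⁻¹ := by
      rw [zpow_neg]
      congr 1
      have h1 : ((n:ℤ) * ((k:ℤ) - 1)) = ((n * (k-1) : ℕ) : ℤ) := by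
        push_cast [Nat.cast_sub (by omega : 1 ≤ k)]
        ring
      rw [h1, zpow_natCast, hQcast, ← pow_mul]
    rw [hzpow]
    have hinv : (0:ℝ) < ((Q:ℝ)^(k-1))⁻¹ := by positivity
    have hdiff : (0:ℝ) ≤ C - (k/2) * A := by
      simp only [hC]
      have h6 : (0:ℝ) ≤ (m:ℝ)^k * (1 + k*B₂/2 + k*B₂) :=
        mul_nonneg (by positivity) (by linarith)
      linarith
    nlinarith [mul_nonneg hdiff hinv.le, hval]
end
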